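/- Characterization of ℓℓ(D) via selected tokens: let p be a sequence of tokens over a context-free grammar G and local lexing ℓℓ = (Lex, Sel) with input D ∈ Σ*. Then p ∈ ℓℓ(D) if and only if (a) for all i with 0 ≤ i < |p|, the token p_i belongs to 𝒵_{|p̄₀…p̄_{i-1}|}^∞, (b) |p̄| = |D|, and (c) [p] ∈ ℒ. -/

import Mathlib

namespace LL
section Defs

/-- A context-free grammar `(𝔑, 𝔗, ℜ, 𝔖)`: nonterminals are the type `N`,
terminals the type `T` (automatically disjoint), `rules ⊆ 𝔑 × (𝔑 ∪ 𝔗)*`,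
and `start ∈ 𝔑`. -/
structure CFG (N T : Type*) where
  rules : Set (N × List (N ⊕ T))
  start : N

variable {N T C : Type*}

/-- One derivation step `α ⇒ β`. -/
def CFG.Step (G : CFG N T) (α β : List (N ⊕ T)) : Prop :=
  ∃ a A b γ, α = a ++ Sum.inl A :: b ∧ β = a ++ γ ++ b ∧ (A, γ) ∈ G.rules

/-- `⇒*`, the reflexive transitive closure of `⇒`. -/
def CFG.Derives (G : CFG N T) : List (N ⊕ T) → List (N ⊕ T) → Prop :=
  Relation.ReflTransGen G.Step

/-- `ℒ = { w ∈ 𝔗* | 𝔖 ⇒* w }`. -/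
def CFG.lang (G : CFG N T) : Set (List T) :=
  {w | G.Derives [Sum.inl G.start] (w.map Sum.inr)}

/-- `ℒ_prefix = { w ∈ 𝔗* | ∃ α. 𝔖 ⇒* w α }`. -/
def CFG.langPrefix (G : CFG N T) : Set (List T) :=
  {w | ∃ α, G.Derives [Sum.inl G.start] (w.map Sum.inr ++ α)}

/-- A token is a pair `(t, c) ∈ 𝔗 × Σ*`. -/
abbrev Token (T C : Type*) := T × List C

/-- `p̄`, the characters of a token sequence. -/
def chars (p : List (Token T C)) : List C := (p.map Prod.snd).flatten

/-- `[p]`, the terminals of a token sequence. -/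
def terms (p : List (Token T C)) : List T := p.map Prod.fst

/-- `limit f X = ⋃ n, fⁿ(X)`. -/
def limit {α : Type*} (f : Set α → Set α) (X : Set α) : Set α := ⋃ n, f^[n] X

/-- A local lexing `(Lex, Sel)` with respect to terminals `T` and characters `C`. -/
structure LocalLexing (T C : Type*) where
  Lex : T → List C → ℕ → Set (Token T C)
  Sel : Set (Token T C) → Set (Token T C) → Set (Token T C)
  lex_sound : ∀ t D k, ∀ x ∈ Lex t D k,
      x.1 = t ∧ k + x.2.length ≤ D.length ∧ x.2 <+: D.drop k
  sel_sound : ∀ A B : Set (Token T C), A ⊆ B → A ⊆ Sel A B ∧ Sel A B ⊆ B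

variable (G : CFG N T) (ll : LocalLexing T C) (D : List C)

/-- `𝒳ₖ = { x | x ∈ Lex([x])(D, k) }`. -/
def Xtok (k : ℕ) : Set (Token T C) := {x | x ∈ ll.Lex x.1 D k}

/-- `𝒲` of a path set `P` at position `k`:
`{ x ∈ 𝒳ₖ | ∃ p ∈ P. |p̄| = k ∧ [p x] ∈ ℒ_prefix }`. -/
def Wtok (P : Set (List (Token T C))) (k : ℕ) : Set (Token T C) :=
  {x | x ∈ Xtok ll D k ∧ ∃ p ∈ P, (chars p).length = k ∧ terms (p ++ [x]) ∈ G.langPrefix}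

/-- `Appendₖ T P = P ∪ { p t | p ∈ P ∧ |p̄| = k ∧ t ∈ T ∧ [p t] ∈ ℒ_prefix }`. -/
def Append (k : ℕ) (Ts : Set (Token T C)) (P : Set (List (Token T C))) :
    Set (List (Token T C)) :=
  P ∪ {q | ∃ p ∈ P, ∃ t ∈ Ts, q = p ++ [t] ∧ (chars p).length = k ∧ terms q ∈ G.langPrefix}

/-- The pair `(𝒫ₖᵘ, 𝒵ₖᵘ)`, starting from the path set `P₀` at position `k`:
`𝒵ₖ⁰ = ∅`, `𝒵ₖᵘ⁺¹ = Sel(𝒵ₖᵘ, 𝒲ₖᵘ⁺¹)` and `𝒫ₖᵘ⁺¹ = limit (Appendₖ 𝒵ₖᵘ⁺¹) 𝒫ₖᵘ`. -/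
def Pstage (k : ℕ) (P₀ : Set (List (Token T C))) :
    ℕ → Set (List (Token T C)) × Set (Token T C)
  | 0 => (P₀, ∅)
  | u + 1 =>
      let PZ := Pstage k P₀ u
      let Z := ll.Sel PZ.2 (Wtok G ll D PZ.1 k)
      (limit (Append G k Z) PZ.1, Z)

/-- `𝒫ₖ⁰`:  `𝒫₀⁰ = {ε}` and `𝒫ₖ₊₁⁰ = 𝒫ₖ^∞`. -/
def Pinit : ℕ → Set (List (Token T C))
  | 0 => {[]}
  | k + 1 => ⋃ u, (Pstage G ll D k (Pinit k) u).1

/-- The path sets `𝒫ₖᵘ`. -/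
def Pset (k u : ℕ) : Set (List (Token T C)) := (Pstage G ll D k (Pinit G ll D k) u).1

/-- The selected token sets `𝒵ₖᵘ`. -/
def Zset (k u : ℕ) : Set (Token T C) := (Pstage G ll D k (Pinit G ll D k) u).2

/-- The admissible token sets `𝒲ₖᵘ`. -/
def Wset (k u : ℕ) : Set (Token T C) := Wtok G ll D (Pset G ll D k u) k

/-- `𝒵ₖ^∞ = ⋃ u, 𝒵ₖᵘ`. -/
def Zinf (k : ℕ) : Set (Token T C) := ⋃ u, Zset G ll D k u

/-- `𝕻 = 𝒫_{|D|}^∞`. -/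
def PP : Set (List (Token T C)) := ⋃ u, Pset G ll D D.length u

/-- `ℓℓ(D) = { p ∈ 𝕻 | |p̄| = |D| ∧ [p] ∈ ℒ }`. -/
def sem : Set (List (Token T C)) :=
  {p | p ∈ PP G ll D ∧ (chars p).length = D.length ∧ terms p ∈ G.lang}

/-- An Earley item `(lhs → pre • post, origin, bin)`. -/
structure EItem (N T : Type*) where
  lhs : N
  pre : List (N ⊕ T)
  post : List (N ⊕ T)
  origin : ℕ
  bin : ℕ

/-- `Init = { (𝔖 → • α, 0, 0) | (𝔖 → α) ∈ ℜ }`. -/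
def EInit : Set (EItem N T) :=
  {x | ∃ α, (G.start, α) ∈ G.rules ∧ x = ⟨G.start, [], α, 0, 0⟩}

/-- The `Predict` operator. -/
def Predict (k : ℕ) (I : Set (EItem N T)) : Set (EItem N T) :=
  I ∪ {x | ∃ M γ, (M, γ) ∈ G.rules ∧
        (∃ N' α β i, (⟨N', α, Sum.inl M :: β, i, k⟩ : EItem N T) ∈ I) ∧
        x = ⟨M, [], γ, k, k⟩}

/-- The `Complete` operator. -/
def Complete (k : ℕ) (I : Set (EItem N T)) : Set (EItem N T) :=
  I ∪ {x | ∃ N' α M β i j γ,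
        (⟨N', α, Sum.inl M :: β, i, j⟩ : EItem N T) ∈ I ∧
        (⟨M, γ, [], j, k⟩ : EItem N T) ∈ I ∧
        x = ⟨N', α ++ [Sum.inl M], β, i, k⟩}

/-- The token-based `Scan` operator. -/
def Scan (Ts : Set (Token T C)) (k : ℕ) (I : Set (EItem N T)) : Set (EItem N T) :=
  I ∪ {x | ∃ N' α X c β i, (X, c) ∈ Ts ∧
        (⟨N', α, Sum.inr X :: β, i, k⟩ : EItem N T) ∈ I ∧
        x = ⟨N', α ++ [Sum.inr X], β, i, k + c.length⟩}

/-- `Tokens T k I = Sel(T, { x | ∃ X N α β i. (N → α • X β, i, k) ∈ I ∧ x ∈ Lex(X)(D, k) })`. -/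
def Tokens (Ts : Set (Token T C)) (k : ℕ) (I : Set (EItem N T)) : Set (Token T C) :=
  ll.Sel Ts {x | ∃ X N' α β i, (⟨N', α, Sum.inr X :: β, i, k⟩ : EItem N T) ∈ I ∧
        x ∈ ll.Lex X D k}

/-- `πₖ T I = limit (Scan T k ∘ Complete k ∘ Predict k) I`. -/
def pik (Ts : Set (Token T C)) (k : ℕ) (I : Set (EItem N T)) : Set (EItem N T) :=
  limit (fun J => Scan Ts k (Complete k (Predict G k J))) I

/-- The pair `(𝔍ₖᵘ, 𝒯ₖᵘ)`, starting from the item set `J₀` at position `k`: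
`𝒯ₖ⁰ = ∅`, `𝒯ₖᵘ⁺¹ = Tokens 𝒯ₖᵘ k 𝔍ₖᵘ` and `𝔍ₖᵘ⁺¹ = πₖ 𝒯ₖᵘ⁺¹ 𝔍ₖᵘ`. -/
def Jstage (k : ℕ) (J₀ : Set (EItem N T)) : ℕ → Set (EItem N T) × Set (Token T C)
  | 0 => (J₀, ∅)
  | u + 1 =>
      let JT := Jstage k J₀ u
      let T' := Tokens ll D JT.2 k JT.1
      (pik G T' k JT.1, T')

/-- `𝔍ₖ⁰`:  `𝔍₀⁰ = π₀ ∅ Init` and `𝔍ₖ₊₁⁰ = πₖ₊₁ ∅ 𝓘ₖ`. -/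
def Jinit : ℕ → Set (EItem N T)
  | 0 => pik G (∅ : Set (Token T C)) 0 (EInit G)
  | k + 1 => pik G (∅ : Set (Token T C)) (k + 1) (⋃ u, (Jstage G ll D k (Jinit k) u).1)

/-- The item sets `𝔍ₖᵘ`. -/
def Jset (k u : ℕ) : Set (EItem N T) := (Jstage G ll D k (Jinit G ll D k) u).1

/-- The token sets `𝒯ₖᵘ`. -/
def Tset (k u : ℕ) : Set (Token T C) := (Jstage G ll D k (Jinit G ll D k) u).2

/-- `𝓘ₖ = ⋃ u, 𝔍ₖᵘ`. -/
def Ibin (k : ℕ) : Set (EItem N T) := ⋃ u, Jset G ll D k u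

/-- `𝕴 = 𝓘_{|D|}`. -/
def Items : Set (EItem N T) := Ibin G ll D D.length

/-- An item `(N → α • β, i, j)` is `p`-valid. -/
def pValid (p : List (Token T C)) (x : EItem N T) : Prop :=
  (x.lhs, x.pre ++ x.post) ∈ G.rules ∧
  ∃ u ≤ p.length, ∃ γ,
    (chars p).length = x.bin ∧
    (chars (p.take u)).length = x.origin ∧
    G.Derives [Sum.inl G.start] ((terms (p.take u)).map Sum.inr ++ Sum.inl x.lhs :: γ) ∧
    G.Derives x.pre ((terms (p.drop u)).map Sum.inr)

/-- `⟨P⟩ = { x | ∃ p ∈ P. x is p-valid }`. -/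
def Gen (P : Set (List (Token T C))) : Set (EItem N T) :=
  {x | ∃ p ∈ P, pValid G p x}


/-! Tokens enter a path only through `Appendₖ` applied to tokens of `𝒵ₖ`, so every path of `𝒫`
is selected. Conversely, `𝒫ₖᵘ` and `𝒵ₖᵘ` grow with `u` and `k`, so a selected path whose terminals
lie in `ℒ_prefix` is built token by token: its last token `t ∈ 𝒵ₖʷ` is appended to the shorter
path `q ∈ 𝒫ₖᵛ` at stage `max v w + 1`. -/

lemma subset_limit {α : Type*} (f : Set α → Set α) (X : Set α) : X ⊆ limit f X :=
  fun _ hx => Set.mem_iUnion.2 ⟨0, hx⟩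

lemma apply_subset_limit {α : Type*} (f : Set α → Set α) (X : Set α) : f X ⊆ limit f X :=
  fun _ hx => Set.mem_iUnion.2 ⟨1, hx⟩

lemma limit_subset {α : Type*} {f : Set α → Set α} {X S : Set α} (hX : X ⊆ S)
    (hf : ∀ Y ⊆ S, f Y ⊆ S) : limit f X ⊆ S := by
  refine Set.iUnion_subset fun n => ?_
  induction n with
  | zero => exact hX
  | succ n ih => rw [Function.iterate_succ_apply']; exact hf _ ih

lemma CFG.mem_langPrefix_of_append {G : CFG N T} {w v : List T}
    (h : w ++ v ∈ G.langPrefix) : w ∈ G.langPrefix := by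
  obtain ⟨α, hα⟩ := h
  exact ⟨v.map Sum.inr ++ α, by simpa using hα⟩

lemma CFG.lang_subset_langPrefix (G : CFG N T) : G.lang ⊆ G.langPrefix :=
  fun _ hw => ⟨[], by rwa [List.append_nil]⟩

lemma chars_append_singleton (q : List (Token T C)) (t : Token T C) :
    chars (q ++ [t]) = chars q ++ t.2 := by
  simp [chars]

lemma terms_append (q r : List (Token T C)) : terms (q ++ r) = terms q ++ terms r :=
  List.map_append

section Stages

variable {G ll D}

lemma PP_eq_Pinit : PP G ll D = Pinit G ll D (D.length + 1) :=
  rfl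

lemma Pset_mono (k : ℕ) : Monotone (Pset G ll D k) :=
  monotone_nat_of_le_succ fun _ => subset_limit _ _

lemma Wtok_mono {P Q : Set (List (Token T C))} (h : P ⊆ Q) (k : ℕ) :
    Wtok G ll D P k ⊆ Wtok G ll D Q k :=
  fun _ ⟨hx, p, hp, hk, hpre⟩ => ⟨hx, p, h hp, hk, hpre⟩

lemma Zset_subset_Wset (k u : ℕ) : Zset G ll D k u ⊆ Wset G ll D k u := by
  induction u with
  | zero => exact Set.empty_subset _
  | succ u ih =>
    exact (ll.sel_sound _ _ ih).2.trans (Wtok_mono (Pset_mono k u.le_succ) k)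

lemma Zset_mono (k : ℕ) : Monotone (Zset G ll D k) :=
  monotone_nat_of_le_succ fun u => (ll.sel_sound _ _ (Zset_subset_Wset k u)).1

lemma Pinit_mono : Monotone (Pinit G ll D) :=
  monotone_nat_of_le_succ fun _ _ hp => Set.mem_iUnion.2 ⟨0, hp⟩

lemma append_mem_Pset_succ {k u : ℕ} {q : List (Token T C)} {t : Token T C}
    (hq : q ∈ Pset G ll D k u) (ht : t ∈ Zset G ll D k (u + 1)) (hk : (chars q).length = k)
    (hpre : terms (q ++ [t]) ∈ G.langPrefix) : q ++ [t] ∈ Pset G ll D k (u + 1) :=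
  apply_subset_limit _ _ (Or.inr ⟨q, hq, t, ht, rfl, hk, hpre⟩)

end Stages

def IsSelectedPath (p : List (Token T C)) : Prop :=
  ∀ i (hi : i < p.length), p[i] ∈ Zinf G ll D (chars (p.take i)).length

section SelectedPaths

variable {G ll D}

lemma isSelectedPath_nil : IsSelectedPath G ll D [] :=
  fun _ hi => absurd hi (Nat.not_lt_zero _)

lemma isSelectedPath_append_singleton_iff {q : List (Token T C)} {t : Token T C} :
    IsSelectedPath G ll D (q ++ [t]) ↔
      IsSelectedPath G ll D q ∧ t ∈ Zinf G ll D (chars q).length := by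
  constructor
  · intro h
    refine ⟨fun i hi => ?_, ?_⟩
    · have h' := h i (by simp; omega)
      rwa [List.getElem_append_left hi, List.take_append_of_le_length hi.le] at h'
    · simpa using h q.length (by simp)
  · rintro ⟨hq, ht⟩ i hi
    rcases Nat.lt_or_ge i q.length with hi' | hi'
    · simpa [List.getElem_append_left hi', List.take_append_of_le_length hi'.le] using hq i hi'
    · obtain rfl : i = q.length := by simp at hi; omega
      simpa using ht

lemma Append_subset_isSelectedPath {k : ℕ} {Z : Set (Token T C)} {P : Set (List (Token T C))}
    (hZ : Z ⊆ Zinf G ll D k) (hP : P ⊆ {p | IsSelectedPath G ll D p}) :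
    Append G k Z P ⊆ {p | IsSelectedPath G ll D p} := by
  rintro _ (hq | ⟨q, hq, t, ht, rfl, rfl, -⟩)
  · exact hP hq
  · exact isSelectedPath_append_singleton_iff.2 ⟨hP hq, hZ ht⟩

lemma Pset_subset_isSelectedPath {k : ℕ} (h : Pinit G ll D k ⊆ {p | IsSelectedPath G ll D p})
    (u : ℕ) : Pset G ll D k u ⊆ {p | IsSelectedPath G ll D p} := by
  induction u with
  | zero => exact h
  | succ u ih =>
    exact limit_subset ih fun Y hY =>
      Append_subset_isSelectedPath (Set.subset_iUnion (Zset G ll D k) (u + 1)) hY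

lemma Pinit_subset_isSelectedPath (k : ℕ) : Pinit G ll D k ⊆ {p | IsSelectedPath G ll D p} := by
  induction k with
  | zero => rintro _ rfl; exact isSelectedPath_nil
  | succ k ih => exact Set.iUnion_subset (Pset_subset_isSelectedPath ih)

lemma mem_Pinit_of_isSelectedPath {p : List (Token T C)} (hp : IsSelectedPath G ll D p)
    (hpre : terms p ∈ G.langPrefix) : p ∈ Pinit G ll D ((chars p).length + 1) := by
  induction p using List.reverseRecOn with
  | nil => exact Set.mem_iUnion.2 ⟨0, rfl⟩
  | append_singleton q t ih =>
    obtain ⟨hq, ht⟩ := isSelectedPath_append_singleton_iff.1 hp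
    have hq_pre : terms q ∈ G.langPrefix :=
      CFG.mem_langPrefix_of_append (by rwa [← terms_append])
    obtain ⟨v, hv⟩ := Set.mem_iUnion.1 (ih hq hq_pre)
    obtain ⟨w, hw⟩ := Set.mem_iUnion.1 ht
    have hqt : q ++ [t] ∈ Pset G ll D (chars q).length (max v w + 1) :=
      append_mem_Pset_succ (Pset_mono _ (le_max_left v w) hv)
        (Zset_mono _ ((le_max_right v w).trans (Nat.le_succ _)) hw) rfl hpre
    have hlen : (chars q).length ≤ (chars (q ++ [t])).length := by
      simp [chars_append_singleton]
    exact Pinit_mono (Nat.succ_le_succ hlen) (Set.mem_iUnion.2 ⟨_, hqt⟩)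

end SelectedPaths

/-- Characterization of `ℓℓ(D)`: `p ∈ ℓℓ(D)` iff (a) every token `pᵢ` of `p` belongs to
`𝒵_{|p̄₀…p̄ᵢ₋₁|}^∞`, (b) `|p̄| = |D|`, and (c) `[p] ∈ ℒ`. -/
theorem sem_characterization {N T C : Type*} (G : CFG N T) (ll : LocalLexing T C)
    (D : List C) (p : List (Token T C)) :
    p ∈ sem G ll D ↔
      ((∀ i (hi : i < p.length), p[i] ∈ Zinf G ll D (chars (p.take i)).length) ∧
        (chars p).length = D.length ∧ terms p ∈ G.lang) := by
  constructor
  · rintro ⟨hP, hlen, hlang⟩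
    exact ⟨Pinit_subset_isSelectedPath (D.length + 1) hP, hlen, hlang⟩
  · rintro ⟨hsel, hlen, hlang⟩
    refine ⟨?_, hlen, hlang⟩
    rw [PP_eq_Pinit, ← hlen]
    exact mem_Pinit_of_isSelectedPath hsel (G.lang_subset_langPrefix hlang)

end Defs
end LL
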